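/- Let k be a field, B = B_{n,m} a bipath poset, and V a B-persistence module. In any decomposition of V as a finite direct sum of interval modules, the multiplicity of the full interval module k_B (supported on all of B) equals the rank of the linear map V(0̂≤1̂): V(0̂) → V(1̂). -/

import Mathlib

open Classical

/-- A persistence module over a poset `P` with coefficients in a field `k`. -/
structure PersMod (k : Type) [Field k] (P : Type) [PartialOrder P] : Type 1 where
  V : P → Type
  [instAddCommGroup : ∀ a, AddCommGroup (V a)]
  [instModule : ∀ a, Module k (V a)]
  [instFinDim : ∀ a, FiniteDimensional k (V a)]
  map : ∀ {a b : P}, a ≤ b → (V a →ₗ[k] V b)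
  map_id : ∀ a : P, map (le_refl a) = LinearMap.id
  map_comp : ∀ {a b c : P} (hab : a ≤ b) (hbc : b ≤ c),
      map (le_trans hab hbc) = (map hbc).comp (map hab)

attribute [instance] PersMod.instAddCommGroup PersMod.instModule PersMod.instFinDim

variable {k : Type} [Field k] {P : Type} [PartialOrder P]

/-- The submodule of natural transformations inside the product of all hom spaces. -/
def PersMod.homSubmodule (M N : PersMod k P) :
    Submodule k (∀ a : P, M.V a →ₗ[k] N.V a) where
  carrier := {F | ∀ (a b : P) (h : a ≤ b), (F b).comp (M.map h) = (N.map h).comp (F a)}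
  add_mem' := by
    intro f g hf hg a b h
    simp only [Pi.add_apply, LinearMap.add_comp, LinearMap.comp_add, hf a b h, hg a b h]
  zero_mem' := by
    intro a b h
    simp
  smul_mem' := by
    intro c f hf a b h
    simp only [Pi.smul_apply, LinearMap.smul_comp, LinearMap.comp_smul, hf a b h]

/-- Morphisms of persistence modules. -/
abbrev PersHom (M N : PersMod k P) := ↥(PersMod.homSubmodule M N)

/-- Isomorphism of persistence modules. -/
def PersMod.Iso (M N : PersMod k P) : Prop :=
  ∃ f : PersHom M N, ∀ a : P, Function.Bijective (f.1 a)

/-- Identity morphism. -/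
def persId (M : PersMod k P) : PersHom M M :=
  ⟨fun _ => LinearMap.id, fun a b h => by simp⟩

/-- Composition of morphisms of persistence modules. -/
def persComp {M N O : PersMod k P} (f : PersHom M N) (g : PersHom N O) : PersHom M O :=
  ⟨fun a => (g.1 a).comp (f.1 a), fun a b h => by
    rw [LinearMap.comp_assoc, f.2 a b h, ← LinearMap.comp_assoc, g.2 a b h,
      LinearMap.comp_assoc]⟩

/-- Finite direct sums of persistence modules. -/
def PersMod.dsum {ι : Type} [Finite ι] (M : ι → PersMod k P) : PersMod k P where
  V a := ∀ i, (M i).V a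
  map h := LinearMap.pi fun i => ((M i).map h).comp (LinearMap.proj i)
  map_id a := by
    ext x i
    simp [PersMod.map_id]
  map_comp hab hbc := by
    apply LinearMap.ext
    intro x
    funext i
    simp only [LinearMap.pi_apply, LinearMap.coe_comp, Function.comp_apply,
      LinearMap.proj_apply]
    rw [(M i).map_comp hab hbc]
    simp

/-- Binary direct sum of persistence modules. -/
def PersMod.prod (M N : PersMod k P) : PersMod k P where
  V a := M.V a × N.V a
  map h := (M.map h).prodMap (N.map h)
  map_id a := by
    ext x <;> simp [PersMod.map_id]
  map_comp hab hbc := by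
    apply LinearMap.ext
    intro x
    try dsimp only
    rw [M.map_comp hab hbc, N.map_comp hab hbc]
    simp

/-- Restriction of a persistence module along a monotone map. -/
def PersMod.comap {Q : Type} [PartialOrder Q] (f : Q →o P) (V : PersMod k P) :
    PersMod k Q where
  V a := V.V (f a)
  map h := V.map (f.monotone h)
  map_id a := V.map_id (f a)
  map_comp hab hbc := V.map_comp (f.monotone hab) (f.monotone hbc)

/-- The sub-persistence module determined by a family of submodules preserved by the
structure maps. -/
def PersMod.sub (W : PersMod k P) (S : ∀ a : P, Submodule k (W.V a))
    (hS : ∀ {a b : P} (h : a ≤ b), ∀ x ∈ S a, W.map h x ∈ S b) : PersMod k P where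
  V a := ↥(S a)
  map h := (W.map h).restrict (hS h)
  map_id a := by
    apply LinearMap.ext
    intro x
    apply Subtype.ext
    simp [LinearMap.restrict_apply, W.map_id]
  map_comp hab hbc := by
    apply LinearMap.ext
    intro x
    apply Subtype.ext
    simp only [LinearMap.restrict_apply, LinearMap.coe_comp, Function.comp_apply]
    rw [W.map_comp hab hbc]
    simp

/-- Convexity of a subset of a poset. -/
def IsConvex (I : Set P) : Prop :=
  ∀ ⦃a b z : P⦄, a ∈ I → b ∈ I → a ≤ z → z ≤ b → z ∈ I

/-- Connectivity of a subset of a poset: any two points are joined by a finite sequence of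
consecutively comparable points inside the subset. -/
def IsConnectedSet (I : Set P) : Prop :=
  ∀ ⦃a⦄, a ∈ I → ∀ ⦃b⦄, b ∈ I →
    Relation.ReflTransGen (fun x y => x ∈ I ∧ y ∈ I ∧ (x ≤ y ∨ y ≤ x)) a b

/-- An interval of a poset: a nonempty convex connected subset. -/
def IsInterval (I : Set P) : Prop :=
  I.Nonempty ∧ IsConvex I ∧ IsConnectedSet I

/-- The interval module `k_I` attached to a convex subset `I`. -/
noncomputable def intervalModule (k : Type) [Field k] {P : Type} [PartialOrder P] (I : Set P)
    (hI : IsConvex I) : PersMod k P where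
  V a := PLift (a ∈ I) → k
  map {a b} _ :=
    { toFun := fun f _ => if ha : a ∈ I then f ⟨ha⟩ else 0
      map_add' := fun f g => by
        funext hb
        by_cases ha : a ∈ I <;> simp [ha]
      map_smul' := fun c f => by
        funext hb
        by_cases ha : a ∈ I <;> simp [ha] }
  map_id a := by
    apply LinearMap.ext
    intro f
    funext hb
    simp only [LinearMap.coe_mk, AddHom.coe_mk, LinearMap.id_coe, id_eq]
    rw [dif_pos hb.down]
  map_comp {a b c} hab hbc := by
    apply LinearMap.ext
    intro f
    funext hc
    by_cases ha : a ∈ I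
    · have hb : b ∈ I := hI ha hc.down hab hbc
      simp only [LinearMap.coe_comp, Function.comp_apply, LinearMap.coe_mk, AddHom.coe_mk,
        dif_pos ha, dif_pos hb]
    · simp only [LinearMap.coe_comp, Function.comp_apply, LinearMap.coe_mk, AddHom.coe_mk,
        dif_neg ha]
      by_cases hb : b ∈ I <;> simp [hb, dif_neg ha]
/-- The underlying type of the bipath poset `B_{n,m}`:
a global minimum `bot = 0̂`, an upper path `1, …, n`, a lower path `1', …, m'`,
and a global maximum `top = 1̂`. -/
inductive Bipath (n m : ℕ) : Type where
  | bot : Bipath n m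
  | up : Fin n → Bipath n m
  | down : Fin m → Bipath n m
  | top : Bipath n m
deriving DecidableEq

namespace Bipath

variable {n m : ℕ}

/-- Auxiliary embedding of the bipath poset into `ℕ × ℕ` (with the product order),
used to define its partial order, which is generated by
`0̂ < 1 < ⋯ < n < 1̂` and `0̂ < 1' < ⋯ < m' < 1̂`. -/
def toPair : Bipath n m → ℕ × ℕ
  | .bot => (0, 0)
  | .up i => (i.1 + 1, 0)
  | .down j => (0, j.1 + 1)
  | .top => (n + 1, m + 1)

theorem toPair_injective : Function.Injective (toPair (n := n) (m := m)) := by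
  intro x y h
  cases x <;> cases y <;>
    simp only [toPair, Prod.mk.injEq] at h <;>
    first
      | rfl
      | (exact absurd h (by omega))
      | (obtain ⟨h1, h2⟩ := h; congr 1; exact Fin.ext (by omega))

instance : PartialOrder (Bipath n m) := PartialOrder.lift toPair toPair_injective

theorem le_iff_toPair {x y : Bipath n m} : x ≤ y ↔ toPair x ≤ toPair y := Iff.rfl

theorem bot_le' (x : Bipath n m) : (Bipath.bot : Bipath n m) ≤ x := by
  rw [le_iff_toPair, Prod.le_def]
  exact ⟨Nat.zero_le _, Nat.zero_le _⟩

theorem le_top' (x : Bipath n m) : x ≤ (Bipath.top : Bipath n m) := by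
  rw [le_iff_toPair, Prod.le_def]
  cases x with
  | bot => exact ⟨Nat.zero_le _, Nat.zero_le _⟩
  | up i => have := i.isLt; exact ⟨by simp only [toPair]; omega, by simp only [toPair]; omega⟩
  | down j => have := j.isLt; exact ⟨by simp only [toPair]; omega, by simp only [toPair]; omega⟩
  | top => exact ⟨le_refl _, le_refl _⟩

theorem up_le_up {i j : Fin n} : (Bipath.up i : Bipath n m) ≤ .up j ↔ i ≤ j := by
  rw [le_iff_toPair, Prod.le_def]
  simp only [toPair, Fin.le_def]
  omega

theorem down_le_down {i j : Fin m} : (Bipath.down i : Bipath n m) ≤ .down j ↔ i ≤ j := by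
  rw [le_iff_toPair, Prod.le_def]
  simp only [toPair, Fin.le_def]
  omega

theorem not_up_le_down {i : Fin n} {j : Fin m} : ¬ (Bipath.up i : Bipath n m) ≤ .down j := by
  rw [le_iff_toPair, Prod.le_def]
  simp only [toPair]
  omega

theorem not_down_le_up {j : Fin m} {i : Fin n} : ¬ (Bipath.down j : Bipath n m) ≤ .up i := by
  rw [le_iff_toPair, Prod.le_def]
  simp only [toPair]
  omega

theorem not_up_le_bot {i : Fin n} : ¬ (Bipath.up i : Bipath n m) ≤ .bot := by
  rw [le_iff_toPair, Prod.le_def]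
  simp only [toPair]
  omega

theorem not_down_le_bot {j : Fin m} : ¬ (Bipath.down j : Bipath n m) ≤ .bot := by
  rw [le_iff_toPair, Prod.le_def]
  simp only [toPair]
  omega

theorem not_top_le_bot : ¬ (Bipath.top : Bipath n m) ≤ .bot := by
  rw [le_iff_toPair, Prod.le_def]
  simp only [toPair]
  omega

theorem not_top_le_up {i : Fin n} : ¬ (Bipath.top : Bipath n m) ≤ .up i := by
  rw [le_iff_toPair, Prod.le_def]
  simp only [toPair]
  omega

theorem not_top_le_down {j : Fin m} : ¬ (Bipath.top : Bipath n m) ≤ .down j := by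
  rw [le_iff_toPair, Prod.le_def]
  simp only [toPair]
  omega

instance : Finite (Bipath n m) := by
  apply Finite.of_surjective
    (fun x : (Unit ⊕ Fin n) ⊕ (Fin m ⊕ Unit) =>
      match x with
      | .inl (.inl _) => (Bipath.bot : Bipath n m)
      | .inl (.inr i) => .up i
      | .inr (.inl j) => .down j
      | .inr (.inr _) => .top)
  intro b
  cases b with
  | bot => exact ⟨.inl (.inl ()), rfl⟩
  | up i => exact ⟨.inl (.inr i), rfl⟩
  | down j => exact ⟨.inr (.inl j), rfl⟩
  | top => exact ⟨.inr (.inr ()), rfl⟩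

end Bipath

section Aux

variable {k : Type} [Field k]

/-- The range of a "diagonal" map on a product is the product of the ranges. -/
theorem range_pi_comp_proj {ι : Type} {φ ψ : ι → Type}
    [∀ i, AddCommGroup (φ i)] [∀ i, Module k (φ i)]
    [∀ i, AddCommGroup (ψ i)] [∀ i, Module k (ψ i)]
    (g : ∀ i, φ i →ₗ[k] ψ i) :
    LinearMap.range (LinearMap.pi fun i => (g i).comp (LinearMap.proj i))
      = Submodule.pi Set.univ fun i => LinearMap.range (g i) := by
  ext x
  simp only [LinearMap.mem_range, Submodule.mem_pi, Set.mem_univ, forall_true_left]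
  constructor
  · rintro ⟨y, rfl⟩ i
    exact ⟨y i, rfl⟩
  · intro hx
    choose y hy using hx
    exact ⟨y, funext hy⟩

/-- A product of submodules is linearly equivalent to the pi type of the submodules. -/
noncomputable def piSubmoduleEquiv {ι : Type} {ψ : ι → Type}
    [∀ i, AddCommGroup (ψ i)] [∀ i, Module k (ψ i)]
    (p : ∀ i, Submodule k (ψ i)) :
    (Submodule.pi Set.univ p) ≃ₗ[k] ∀ i, p i where
  toFun x := fun i => ⟨x.1 i, x.2 i (Set.mem_univ i)⟩
  map_add' x y := rfl
  map_smul' c x := rfl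
  invFun y := ⟨fun i => (y i).1, fun i _ => (y i).2⟩
  left_inv x := rfl
  right_inv y := rfl

theorem finrank_submodule_pi {ι : Type} [Fintype ι] {ψ : ι → Type}
    [∀ i, AddCommGroup (ψ i)] [∀ i, Module k (ψ i)] [∀ i, FiniteDimensional k (ψ i)]
    (p : ∀ i, Submodule k (ψ i)) :
    Module.finrank k (Submodule.pi Set.univ p) = ∑ i, Module.finrank k (p i) := by
  rw [(piSubmoduleEquiv p).finrank_eq]
  exact Module.finrank_pi_fintype k

theorem interval_rank {n m : ℕ} (I : Set (Bipath n m)) (hc : IsConvex I) :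
    Module.finrank k
        (LinearMap.range ((intervalModule k I hc).map (Bipath.bot_le' Bipath.top)))
      = if I = Set.univ then 1 else 0 := by
  by_cases hI : I = Set.univ
  · rw [if_pos hI]
    have hbot : (Bipath.bot : Bipath n m) ∈ I := hI ▸ Set.mem_univ _
    have htop : (Bipath.top : Bipath n m) ∈ I := hI ▸ Set.mem_univ _
    haveI : Subsingleton (PLift ((Bipath.bot : Bipath n m) ∈ I)) :=
      ⟨fun a b => by cases a; cases b; rfl⟩
    haveI : Unique (PLift ((Bipath.bot : Bipath n m) ∈ I)) :=
      ⟨⟨⟨hbot⟩⟩, fun x => Subsingleton.elim _ _⟩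
    have hinj : Function.Injective
        ((intervalModule k I hc).map (Bipath.bot_le' Bipath.top)) := by
      intro f g hfg
      funext hb
      have h1 : (intervalModule k I hc).map (Bipath.bot_le' Bipath.top) f ⟨htop⟩
          = (intervalModule k I hc).map (Bipath.bot_le' Bipath.top) g ⟨htop⟩ := by
        rw [hfg]
      simp only [intervalModule, LinearMap.coe_mk, AddHom.coe_mk, dif_pos hbot] at h1
      have : hb = ⟨hbot⟩ := Subsingleton.elim _ _
      rw [this]
      exact h1
    rw [LinearMap.finrank_range_of_inj hinj]
    have h1 : Module.finrank k (PLift ((Bipath.bot : Bipath n m) ∈ I) → k) = 1 := by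
      rw [Module.finrank_pi k]
      exact Fintype.card_unique
    exact h1
  · rw [if_neg hI]
    have hzero : (intervalModule k I hc).map
        (Bipath.bot_le' (Bipath.top : Bipath n m)) = 0 := by
      apply LinearMap.ext
      intro f
      funext hb
      have htop : (Bipath.top : Bipath n m) ∈ I := hb.down
      by_cases hbot : (Bipath.bot : Bipath n m) ∈ I
      · exfalso
        apply hI
        apply Set.eq_univ_iff_forall.mpr
        intro z
        exact hc hbot htop (Bipath.bot_le' z) (Bipath.le_top' z)
      · simp only [intervalModule, LinearMap.coe_mk, AddHom.coe_mk, dif_neg hbot]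
        rfl
    rw [hzero, LinearMap.range_zero, finrank_bot]

end Aux

/-- In any decomposition of a bipath persistence module `V` as a finite
direct sum of interval modules, the multiplicity of the full interval module `k_B`
(supported on all of `B`) equals the rank of `V(0̂ ≤ 1̂)`. -/
theorem statement4 (k : Type) [Field k] {n m : ℕ} (V : PersMod k (Bipath n m))
    (ι : Type) [Finite ι] (J : ι → Set (Bipath n m)) (hJ : ∀ i, IsInterval (J i))
    (hiso : PersMod.Iso V (PersMod.dsum fun i => intervalModule k (J i) (hJ i).2.1)) :
    Nat.card {i : ι // J i = Set.univ}
      = Module.finrank k (LinearMap.range (V.map (Bipath.bot_le' Bipath.top))) := by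
  haveI := Fintype.ofFinite ι
  set W := PersMod.dsum fun i => intervalModule k (J i) (hJ i).2.1 with hW
  set h : (Bipath.bot : Bipath n m) ≤ Bipath.top := Bipath.bot_le' Bipath.top
  obtain ⟨f, hf⟩ := hiso
  -- the rank of `V.map h` equals the rank of `W.map h`
  have hcomm := f.2 Bipath.bot Bipath.top h
  let eTop : V.V Bipath.top ≃ₗ[k] W.V Bipath.top :=
    LinearEquiv.ofBijective (f.1 Bipath.top) (hf Bipath.top)
  have hsurj : LinearMap.range (f.1 Bipath.bot) = ⊤ :=
    LinearMap.range_eq_top.mpr (hf Bipath.bot).2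
  have hrankeq : Module.finrank k (LinearMap.range (W.map h))
      = Module.finrank k (LinearMap.range (V.map h)) := by
    have h1 : LinearMap.range (W.map h)
        = LinearMap.range ((W.map h).comp (f.1 Bipath.bot)) :=
      (LinearMap.range_comp_of_range_eq_top _ hsurj).symm
    have h2 : LinearMap.range ((f.1 Bipath.top).comp (V.map h))
        = Submodule.map (f.1 Bipath.top) (LinearMap.range (V.map h)) :=
      LinearMap.range_comp _ _
    have h3 : (eTop : V.V Bipath.top →ₗ[k] W.V Bipath.top) = f.1 Bipath.top := rfl
    rw [h1, ← hcomm, h2, ← h3, LinearEquiv.finrank_map_eq]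
  rw [← hrankeq]
  -- compute the rank of `W.map h`
  have hWmap : LinearMap.range (W.map h)
      = Submodule.pi Set.univ fun i =>
          LinearMap.range ((intervalModule k (J i) (hJ i).2.1).map h) :=
    range_pi_comp_proj _
  have hpi : Module.finrank k (LinearMap.range (W.map h))
      = ∑ i, Module.finrank k
          (LinearMap.range ((intervalModule k (J i) (hJ i).2.1).map h)) := by
    rw [hWmap]
    exact finrank_submodule_pi _
  rw [hpi]
  have hsum : ∀ i : ι,
      Module.finrank k (LinearMap.range ((intervalModule k (J i) (hJ i).2.1).map h))
        = if J i = Set.univ then 1 else 0 := fun i => interval_rank (J i) (hJ i).2.1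
  rw [Finset.sum_congr rfl fun i _ => hsum i]
  rw [Nat.card_eq_fintype_card, Fintype.card_subtype, Finset.card_filter]
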